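/- Let H ≤ G × G be a subspace with Goursat data E_X = {x | ∃ z, (x,z) ∈ H}, E_Z = {z | ∃ x, (x,z) ∈ H}, N_X = {x | (x,0) ∈ H}, N_Z = {z | (0,z) ∈ H}. Then the Goursat data of the complement H^ω is given by: {x | ∃ z, (x,z) ∈ H^ω} = N_Z^θ, {z | ∃ x, (x,z) ∈ H^ω} = N_X^θ, {x | (x,0) ∈ H^ω} = E_Z^θ, and {z | (0,z) ∈ H^ω} = E_X^θ. -/

import Mathlib

open Finset

/-- Orthogonal complement of a submodule with respect to a bilinear form:
`ortho ξ H = {v | ξ(v,h) = 0 for all h ∈ H}`. -/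
def ortho {K V : Type*} [CommSemiring K] [AddCommMonoid V] [Module K V]
    (ξ : V →ₗ[K] V →ₗ[K] K) (H : Submodule K V) : Submodule K V :=
  ⨅ h ∈ H, LinearMap.ker (ξ.flip h)

/-- The dot product `θ(a,b) = ∑ j, a j * b j` as a bilinear form on `Fin n → ZMod p`. -/
def dotB (p n : ℕ) : (Fin n → ZMod p) →ₗ[ZMod p] (Fin n → ZMod p) →ₗ[ZMod p] ZMod p :=
  LinearMap.mk₂ (ZMod p) (fun a b => ∑ j, a j * b j)
    (fun a a' b => by simp [add_mul, Finset.sum_add_distrib])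
    (fun c a b => by simp [Finset.mul_sum, mul_assoc])
    (fun a b b' => by simp [mul_add, Finset.sum_add_distrib])
    (fun c a b => by simp [Finset.mul_sum, mul_left_comm])

/-- The symmetric form on `V × V` induced by a bilinear form `B` on `V`:
`(v,w) ↦ B v.1 w.1 + B v.2 w.2`. -/
def sumB {K V : Type*} [CommRing K] [AddCommGroup V] [Module K V]
    (B : V →ₗ[K] V →ₗ[K] K) : (V × V) →ₗ[K] (V × V) →ₗ[K] K :=
  LinearMap.mk₂ K (fun v w => B v.1 w.1 + B v.2 w.2)
    (fun v v' w => by simp; ring)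
    (fun c v w => by simp; ring)
    (fun v w w' => by simp; ring)
    (fun c v w => by simp; ring)

/-- The symplectic form on `V × V` induced by a symmetric bilinear form `B` on `V`:
`(v,w) ↦ B v.2 w.1 - B v.1 w.2`. -/
def sympB {K V : Type*} [CommRing K] [AddCommGroup V] [Module K V]
    (B : V →ₗ[K] V →ₗ[K] K) : (V × V) →ₗ[K] (V × V) →ₗ[K] K :=
  LinearMap.mk₂ K (fun v w => B v.2 w.1 - B v.1 w.2)
    (fun v v' w => by simp; ring)
    (fun c v w => by simp; ring)
    (fun v w w' => by simp; ring)
    (fun c v w => by simp; ring)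

/-!
The zero-fibres of `H^ω` are computed directly: `(x, 0) ∈ H^ω` says `θ(x, d) = 0` for every
second coordinate `d` of `H`, and symmetrically for `(0, z)`. Applying this to `H^ω` in place
of `H` and using `H^ωω = H`, `S^θθ = S` (both forms are nondegenerate and reflexive in finite
dimension) turns these two identities into the two identities for the projections.
-/

open LinearMap

section Ortho

variable {K V : Type*}

lemma mem_ortho_iff [CommSemiring K] [AddCommMonoid V] [Module K V]
    (ξ : V →ₗ[K] V →ₗ[K] K) (H : Submodule K V) (v : V) :
    v ∈ ortho ξ H ↔ ∀ h ∈ H, ξ v h = 0 := by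
  simp [ortho]

lemma ortho_eq_orthogonal [CommSemiring K] [AddCommMonoid V] [Module K V]
    {ξ : V →ₗ[K] V →ₗ[K] K} (hξ : ξ.IsRefl) (H : Submodule K V) :
    ortho ξ H = BilinForm.orthogonal ξ H := by
  ext v
  rw [mem_ortho_iff, BilinForm.mem_orthogonal_iff]
  exact ⟨fun h x hx => hξ _ _ (h x hx), fun h x hx => hξ _ _ (h x hx)⟩

lemma ortho_ortho [Field K] [AddCommGroup V] [Module K V] [FiniteDimensional K V]
    {ξ : V →ₗ[K] V →ₗ[K] K} (hξ : ξ.IsRefl) (hn : BilinForm.Nondegenerate ξ)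
    (H : Submodule K V) : ortho ξ (ortho ξ H) = H := by
  rw [ortho_eq_orthogonal hξ, ortho_eq_orthogonal hξ]
  exact BilinForm.orthogonal_orthogonal hn hξ H

end Ortho

section Symplectic

variable {K V : Type*} [CommRing K] [AddCommGroup V] [Module K V] {B : V →ₗ[K] V →ₗ[K] K}

@[simp]
lemma sympB_apply (v w : V × V) : sympB B v w = B v.2 w.1 - B v.1 w.2 := rfl

lemma sympB_isRefl (hB : B.IsSymm) : (sympB B).IsRefl := by
  intro v w h
  rw [sympB_apply] at h ⊢
  rw [← hB.eq v.1 w.2, ← hB.eq v.2 w.1]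
  linear_combination -h

lemma sympB_nondegenerate (hB : B.IsSymm) (hn : BilinForm.Nondegenerate B) :
    BilinForm.Nondegenerate (sympB B) := by
  refine (sympB_isRefl hB).nondegenerate_iff_separatingLeft.2 fun v hv => Prod.ext ?_ ?_
  · exact hn.1 _ fun d => by simpa using hv (0, d)
  · exact hn.1 _ fun c => by simpa using hv (c, 0)

variable (B)

lemma comap_inl_ortho_sympB (H : Submodule K (V × V)) :
    (ortho (sympB B) H).comap (inl K V V) = ortho B (H.map (snd K V V)) := by
  ext x
  simpa [mem_ortho_iff] using forall_comm

lemma comap_inr_ortho_sympB (H : Submodule K (V × V)) :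
    (ortho (sympB B) H).comap (inr K V V) = ortho B (H.map (fst K V V)) := by
  ext z
  simp [mem_ortho_iff]

end Symplectic

section Projections

variable {K V : Type*} [Field K] [AddCommGroup V] [Module K V] [FiniteDimensional K V]
  {B : V →ₗ[K] V →ₗ[K] K}

lemma map_fst_ortho_sympB (hB : B.IsSymm) (hn : BilinForm.Nondegenerate B)
    (H : Submodule K (V × V)) :
    (ortho (sympB B) H).map (fst K V V) = ortho B (H.comap (inr K V V)) := by
  have h := comap_inr_ortho_sympB B (ortho (sympB B) H)
  rw [ortho_ortho (sympB_isRefl hB) (sympB_nondegenerate hB hn)] at h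
  rw [h, ortho_ortho hB.isRefl hn]

lemma map_snd_ortho_sympB (hB : B.IsSymm) (hn : BilinForm.Nondegenerate B)
    (H : Submodule K (V × V)) :
    (ortho (sympB B) H).map (snd K V V) = ortho B (H.comap (inl K V V)) := by
  have h := comap_inl_ortho_sympB B (ortho (sympB B) H)
  rw [ortho_ortho (sympB_isRefl hB) (sympB_nondegenerate hB hn)] at h
  rw [h, ortho_ortho hB.isRefl hn]

end Projections

lemma dotB_isSymm (p n : ℕ) : (dotB p n).IsSymm :=
  ⟨fun a b => by simp [dotB, mul_comm]⟩

lemma dotB_nondegenerate (p n : ℕ) : BilinForm.Nondegenerate (dotB p n) := by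
  refine (dotB_isSymm p n).isRefl.nondegenerate_iff_separatingLeft.2 fun a ha => ?_
  funext j
  simpa [dotB, Pi.single_apply] using ha (Pi.single j 1)

/-- for `H ≤ G × G` with Goursat data
`E_X = {x | ∃ z, (x,z) ∈ H}`, `E_Z = {z | ∃ x, (x,z) ∈ H}`,
`N_X = {x | (x,0) ∈ H}`, `N_Z = {z | (0,z) ∈ H}`, the Goursat data of `H^ω` is
`{x | ∃ z, (x,z) ∈ H^ω} = N_Z^θ`, `{z | ∃ x, (x,z) ∈ H^ω} = N_X^θ`,
`{x | (x,0) ∈ H^ω} = E_Z^θ`, and `{z | (0,z) ∈ H^ω} = E_X^θ`. -/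
theorem stmt14 (p n : ℕ) [Fact p.Prime]
    (H : Submodule (ZMod p) ((Fin n → ZMod p) × (Fin n → ZMod p))) :
    (ortho (sympB (dotB p n)) H).map (LinearMap.fst (ZMod p) _ _)
      = ortho (dotB p n) (H.comap (LinearMap.inr (ZMod p) _ _)) ∧
    (ortho (sympB (dotB p n)) H).map (LinearMap.snd (ZMod p) _ _)
      = ortho (dotB p n) (H.comap (LinearMap.inl (ZMod p) _ _)) ∧
    (ortho (sympB (dotB p n)) H).comap (LinearMap.inl (ZMod p) _ _)
      = ortho (dotB p n) (H.map (LinearMap.snd (ZMod p) _ _)) ∧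
    (ortho (sympB (dotB p n)) H).comap (LinearMap.inr (ZMod p) _ _)
      = ortho (dotB p n) (H.map (LinearMap.fst (ZMod p) _ _)) :=
  ⟨map_fst_ortho_sympB (dotB_isSymm p n) (dotB_nondegenerate p n) H,
    map_snd_ortho_sympB (dotB_isSymm p n) (dotB_nondegenerate p n) H,
    comap_inl_ortho_sympB _ H, comap_inr_ortho_sympB _ H⟩
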